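/- arXiv:2604.07876 — 4 statements merged into one kernel-verified Lean document; each statement's English description precedes it below -/
import Mathlib

section
/- Let K be a field of characteristic ≠ 2, let q > 0 be an integer, and let M be a q×q matrix with entries in the formal power series ring K⟦X⟧ that is skew-symmetric (Mᵀ = −M). For each integer k ≥ 1, let ψ_k : B_k^q → B_k^q be the B_k-linear map given by (the reduction of) M, where B_k := K⟦X⟧/(X^k). Then the dimension of the image of ψ_k as a K-vector space is even. -/
/-!
The functional `coeff (k - 1)` makes `Bₖ = K⟦X⟧ ⧸ (X^k)` a Frobenius algebra over `K`: the
pairing `(r, s) ↦ coeff (k - 1) (r * s)` is nondegenerate. Composed with the dot product it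
gives a nondegenerate symmetric `K`-bilinear form `β` on `Bₖ^q` for which `ψₖ` is skew-adjoint,
so `(u, v) ↦ β (ψₖ u) v` is a skew-symmetric form of the same rank as `ψₖ`. A skew-symmetric
form is nondegenerate on a complement of its kernel, and a nondegenerate skew-symmetric form
lives on an even-dimensional space because `det A = det (-Aᵀ) = (-1)ⁿ det A`.
-/

open Matrix

theorem Matrix.even_card_of_transpose_eq_neg_of_det_ne_zero {n R : Type*} [Fintype n]
    [DecidableEq n] [CommRing R] [NoZeroDivisors R] (h2 : (2 : R) ≠ 0)
    {A : Matrix n n R} (hA : Aᵀ = -A) (hdet : A.det ≠ 0) : Even (Fintype.card n) := by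
  by_contra hodd
  rw [Nat.not_even_iff_odd] at hodd
  have hneg : A.det = -A.det := by
    conv_lhs => rw [← det_transpose, hA, det_neg, hodd.neg_one_pow, neg_one_mul]
  have h2det : 2 * A.det = 0 := by rw [two_mul]; exact add_eq_zero_iff_eq_neg.mpr hneg
  exact hdet <| (mul_eq_zero.mp h2det).resolve_left h2

namespace LinearMap.BilinForm

variable {K V : Type*} [Field K] [AddCommGroup V] [Module K V] [FiniteDimensional K V]

theorem even_finrank_of_nondegenerate_of_flip_eq_neg (h2 : (2 : K) ≠ 0)
    {B : LinearMap.BilinForm K V} (hB : B.Nondegenerate) (hskew : B.flip = -B) :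
    Even (Module.finrank K V) := by
  let b := Module.finBasis K V
  simpa using Matrix.even_card_of_transpose_eq_neg_of_det_ne_zero h2
    (A := toMatrix b B) (by ext i j; simpa [toMatrix_apply] using congr_fun₂ hskew (b i) (b j))
    ((nondegenerate_iff_det_ne_zero b).mp hB)

theorem even_finrank_range_of_flip_eq_neg (h2 : (2 : K) ≠ 0)
    {B : LinearMap.BilinForm K V} (hskew : B.flip = -B) :
    Even (Module.finrank K (LinearMap.range B)) := by
  obtain ⟨W, hW⟩ := (LinearMap.ker B).exists_isCompl
  have hker : LinearMap.ker (B.restrict W) = ⊥ := by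
    rw [ker_restrict_eq_of_codisjoint hW.symm.codisjoint, ← Submodule.disjoint_iff_comap_eq_bot]
    · exact hW.symm.disjoint
    · intro x _ y hy
      simpa [LinearMap.mem_ker.mp hy] using congr_fun₂ hskew y x
  have hW_even : Even (Module.finrank K W) :=
    even_finrank_of_nondegenerate_of_flip_eq_neg h2 (nondegenerate_iff_ker_eq_bot.mpr hker)
      (by ext x y; simpa using congr_fun₂ hskew x y)
  have hrank := LinearMap.finrank_range_add_finrank_ker B
  have hcompl := Submodule.finrank_add_eq_of_isCompl hW
  rwa [show Module.finrank K (LinearMap.range B) = Module.finrank K W by omega]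

theorem even_finrank_range_of_isSkewAdjoint (h2 : (2 : K) ≠ 0)
    {β : LinearMap.BilinForm K V} (hβ : β.IsSymm) (hβ' : LinearMap.ker β = ⊥)
    {f : V →ₗ[K] V} (hf : LinearMap.IsSkewAdjoint β f) :
    Even (Module.finrank K (LinearMap.range f)) := by
  have hskew : (β ∘ₗ f).flip = -(β ∘ₗ f) := by
    ext x y
    simp [hf y x, hβ.eq y]
  rw [(Submodule.equivMapOfInjective β (LinearMap.ker_eq_bot.mp hβ') _).finrank_eq,
    ← LinearMap.range_comp]
  exact even_finrank_range_of_flip_eq_neg h2 hskew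

end LinearMap.BilinForm

theorem Matrix.even_finrank_range_toLin'_of_transpose_eq_neg {K R ι : Type*} [Field K]
    [CommRing R] [Algebra K R] [Module.Finite K R] [Fintype ι] [DecidableEq ι]
    (h2 : (2 : K) ≠ 0) (l : R →ₗ[K] K) (hl : ∀ r, (∀ s, l (r * s) = 0) → r = 0)
    {N : Matrix ι ι R} (hN : Nᵀ = -N) :
    Even (Module.finrank K ((LinearMap.range (toLin' N)).restrictScalars K)) := by
  let β : LinearMap.BilinForm K (ι → R) := (dotProductBilin K K).compr₂ l
  have hβ : β.IsSymm := ⟨fun u v => by simp [β, dotProduct_comm]⟩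
  have hβ' : LinearMap.ker β = ⊥ := LinearMap.ker_eq_bot'.mpr fun u hu =>
    funext fun i => hl (u i) fun s => by
      simpa [β, dotProduct_single] using LinearMap.congr_fun hu (Pi.single i s : ι → R)
  have hf : LinearMap.IsSkewAdjoint β ((toLin' N).restrictScalars K) := fun u v => by
    have : N *ᵥ u = -(u ᵥ* N) := by rw [← mulVec_transpose, hN, neg_mulVec, neg_neg]
    simp [β, this, dotProduct_mulVec]
  rw [← LinearMap.range_restrictScalars]
  exact LinearMap.BilinForm.even_finrank_range_of_isSkewAdjoint h2 hβ hβ' hf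

namespace PowerSeries

variable (R : Type*) [CommRing R]

instance finite_quotient_span_X_pow (n : ℕ) :
    Module.Finite R (R⟦X⟧ ⧸ Ideal.span {(X : R⟦X⟧) ^ n}) := by
  have : Module.Finite R (Polynomial.degreeLT R n) :=
    Module.Finite.equiv (Polynomial.degreeLTEquiv R n).symm
  refine Module.Finite.of_surjective ((Ideal.Quotient.mkₐ R _).toLinearMap ∘ₗ
    (Polynomial.coeToPowerSeries.algHom R).toLinearMap ∘ₗ (Polynomial.degreeLT R n).subtype) ?_
  intro r
  obtain ⟨f, rfl⟩ := Ideal.Quotient.mk_surjective r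
  refine ⟨⟨trunc n f, Polynomial.mem_degreeLT.mpr (degree_trunc_lt f n)⟩, ?_⟩
  conv_rhs => rw [eq_X_pow_mul_shift_add_trunc n f]
  simp

noncomputable def coeffModXPow (n : ℕ) : (R⟦X⟧ ⧸ Ideal.span {(X : R⟦X⟧) ^ (n + 1)}) →ₗ[R] R :=
  ((Ideal.span {(X : R⟦X⟧) ^ (n + 1)}).restrictScalars R).liftQ (coeff n)
      (fun _ hf => (X_pow_dvd_iff.mp (Ideal.mem_span_singleton.mp hf)) n n.lt_succ_self) ∘ₗ
    (Submodule.Quotient.restrictScalarsEquiv R _).symm.toLinearMap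

variable {R}

@[simp]
theorem coeffModXPow_mk (n : ℕ) (f : R⟦X⟧) :
    coeffModXPow R n (Ideal.Quotient.mk _ f) = coeff n f :=
  rfl

theorem eq_zero_of_forall_coeffModXPow_mul_eq_zero {n : ℕ}
    {r : R⟦X⟧ ⧸ Ideal.span {(X : R⟦X⟧) ^ (n + 1)}}
    (hr : ∀ s, coeffModXPow R n (r * s) = 0) : r = 0 := by
  obtain ⟨f, rfl⟩ := Ideal.Quotient.mk_surjective r
  rw [Ideal.Quotient.eq_zero_iff_mem, Ideal.mem_span_singleton, X_pow_dvd_iff]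
  intro m hm
  have hmn : m ≤ n := Nat.le_of_lt_succ hm
  have := hr (Ideal.Quotient.mk _ (X ^ (n - m)))
  rwa [← map_mul, coeffModXPow_mk, coeff_mul_X_pow', if_pos (Nat.sub_le n m),
    Nat.sub_sub_self hmn] at this

end PowerSeries

theorem even_finrank_range_of_skew_powerseries_general
    (K : Type*) [Field K] (hK : ringChar K ≠ 2)
    (q : ℕ)
    (M : Matrix (Fin q) (Fin q) (PowerSeries K))
    (hM : Mᵀ = -M)
    (k : ℕ) (hk : 1 ≤ k) :
    Even (Module.finrank K
      (Submodule.restrictScalars K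
        (LinearMap.range (Matrix.toLin'
          (M.map (Ideal.Quotient.mk
            (Ideal.span {(PowerSeries.X : PowerSeries K) ^ k}))))))) := by
  obtain ⟨n, rfl⟩ := Nat.exists_eq_add_of_le' hk
  refine Matrix.even_finrank_range_toLin'_of_transpose_eq_neg (Ring.two_ne_zero hK)
    (PowerSeries.coeffModXPow K n) (fun _ => PowerSeries.eq_zero_of_forall_coeffModXPow_mul_eq_zero)
    ?_
  rw [← transpose_map, hM, Matrix.map_neg _ (map_neg _)]

/-- Let `K` be a field of characteristic `≠ 2`, `q > 0`, and `M` a `q × q`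
skew-symmetric matrix over the formal power series ring `K⟦X⟧`.  For `k ≥ 1`, the `Bₖ`-linear
map `ψₖ : Bₖ^q → Bₖ^q` induced by the reduction of `M` modulo `X^k`
(where `Bₖ := K⟦X⟧ ⧸ (X^k)`) has image of even dimension as a `K`-vector space. -/
theorem even_finrank_range_of_skew_powerseries
    (K : Type*) [Field K] (hK : ringChar K ≠ 2)
    (q : ℕ) (hq : 0 < q)
    (M : Matrix (Fin q) (Fin q) (PowerSeries K))
    (hM : Mᵀ = -M)
    (k : ℕ) (hk : 1 ≤ k) :
    Even (Module.finrank K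
      (Submodule.restrictScalars K
        (LinearMap.range (Matrix.toLin'
          (M.map (Ideal.Quotient.mk
            (Ideal.span {(PowerSeries.X : PowerSeries K) ^ k}))))))) :=
  even_finrank_range_of_skew_powerseries_general K hK q M hM k hk
end

section
/- Let K be a field, let q > 0 and k ≥ 1 be integers, and let M be a q×q matrix with entries in K⟦X⟧; write M = Σ_{j≥0} X^j M_j where each M_j is a q×q matrix over K (the j-th coefficient matrix of M). Let ψ_k : B_k^q → B_k^q be the B_k-linear map given by the reduction of M, where B_k := K⟦X⟧/(X^k). Then the dimension of the image of ψ_k as a K-vector space equals the rank of the (kq)×(kq) block matrix N_k over K whose block in block-row i and block-column j (for 0 ≤ i, j ≤ k−1) is M_{k−1−i−j} if k−1−i−j ≥ 0 and the zero matrix otherwise. -/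
/-!
In the `K`-basis `1, X, …, X^(k-1)` of `Bₖ = K⟦X⟧ ⧸ (X^k)`, multiplication by a power series `f`
is the lower-triangular Toeplitz matrix `(coeff (i - j) f)_{j ≤ i}`. Hence the matrix of `ψₖ`,
viewed as a `K`-linear map of `Bₖ^q`, is the `kq × kq` matrix with `(a, i), (b, j)` entry
`coeff (i - j) (M a b)` for `j ≤ i`, and its rank is `dim_K (im ψₖ)`. Reversing the order of the
row index `i` and swapping the two index factors turns it into `Nₖ`, and permuting rows and
columns does not change the rank.
-/

open Matrix

namespace PowerSeries

variable {R : Type*} [CommRing R] {k : ℕ}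

theorem mk_span_X_pow_eq_mk_iff {f g : R⟦X⟧} :
    Ideal.Quotient.mk (Ideal.span {X ^ k}) f = Ideal.Quotient.mk (Ideal.span {X ^ k}) g ↔
      ∀ i < k, coeff i f = coeff i g := by
  simp only [Ideal.Quotient.mk_eq_mk_iff_sub_mem, Ideal.mem_span_singleton, X_pow_dvd_iff,
    map_sub, sub_eq_zero]

theorem coeff_sum_smul_X_pow (c : Fin k → R) (i : Fin k) :
    coeff i (∑ j, c j • (X : R⟦X⟧) ^ (j : ℕ)) = c i := by
  simp [coeff_X_pow, Fin.val_inj]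

theorem mk_sum_smul_X_pow (c : Fin k → R) :
    Ideal.Quotient.mk (Ideal.span {X ^ k}) (∑ j, c j • (X : R⟦X⟧) ^ (j : ℕ)) =
      ∑ j, c j • Ideal.Quotient.mk (Ideal.span {X ^ k}) ((X : R⟦X⟧) ^ (j : ℕ)) := by
  simp only [← Ideal.Quotient.mkₐ_eq_mk R, map_sum, map_smul]

theorem mk_eq_sum_coeff_smul (f : R⟦X⟧) :
    Ideal.Quotient.mk (Ideal.span {X ^ k}) f =
      ∑ j : Fin k, coeff j f • Ideal.Quotient.mk (Ideal.span {X ^ k}) ((X : R⟦X⟧) ^ (j : ℕ)) := by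
  rw [← mk_sum_smul_X_pow, mk_span_X_pow_eq_mk_iff]
  intro i hi
  exact (coeff_sum_smul_X_pow (fun j : Fin k ↦ coeff j f) ⟨i, hi⟩).symm

variable (R k) in
noncomputable def quotientSpanXPowBasis :
    Module.Basis (Fin k) R (R⟦X⟧ ⧸ Ideal.span {(X : R⟦X⟧) ^ k}) :=
  .mk (v := fun j ↦ Ideal.Quotient.mk _ ((X : R⟦X⟧) ^ (j : ℕ)))
    (Fintype.linearIndependent_iff.mpr fun c hc i ↦ by
      rw [← mk_sum_smul_X_pow, ← map_zero (Ideal.Quotient.mk _), mk_span_X_pow_eq_mk_iff] at hc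
      simpa only [coeff_sum_smul_X_pow, map_zero] using hc i i.isLt)
    (fun x _ ↦ by
      obtain ⟨f, rfl⟩ := Ideal.Quotient.mk_surjective x
      rw [mk_eq_sum_coeff_smul f]
      exact Submodule.sum_mem _ fun j _ ↦ Submodule.smul_mem _ _ (Submodule.subset_span ⟨j, rfl⟩))

theorem quotientSpanXPowBasis_apply (j : Fin k) :
    quotientSpanXPowBasis R k j = Ideal.Quotient.mk _ ((X : R⟦X⟧) ^ (j : ℕ)) :=
  Module.Basis.mk_apply ..

theorem quotientSpanXPowBasis_repr_mk (f : R⟦X⟧) (j : Fin k) :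
    (quotientSpanXPowBasis R k).repr (Ideal.Quotient.mk _ f) j = coeff j f := by
  simp_rw [mk_eq_sum_coeff_smul f, ← quotientSpanXPowBasis_apply, Module.Basis.repr_sum_self]

theorem leftMulMatrix_quotientSpanXPowBasis_mk (f : R⟦X⟧) (i j : Fin k) :
    Algebra.leftMulMatrix (quotientSpanXPowBasis R k) (Ideal.Quotient.mk _ f) i j =
      if j ≤ i then coeff (i - j : ℕ) f else 0 := by
  rw [Algebra.leftMulMatrix_eq_repr_mul, quotientSpanXPowBasis_apply, ← map_mul,
    quotientSpanXPowBasis_repr_mk, coeff_mul_X_pow']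
  rfl

end PowerSeries

theorem Matrix.finrank_range_toLin'_restrictScalars {K A m ι : Type*} [CommSemiring K]
    [CommSemiring A] [Algebra K A] [Fintype m] [DecidableEq m] [Fintype ι] [DecidableEq ι]
    (b : Module.Basis ι K A) (M : Matrix m m A) :
    Module.finrank K ((LinearMap.range (toLin' M)).restrictScalars K) =
      (comp m m ι ι K (M.map (Algebra.leftMulMatrix b))).rank := by
  have h := LinearMap.restrictScalars_toMatrix (M := m → A) b (Pi.basisFun A m) (toLin' M)
  rw [LinearMap.toMatrix_eq_toMatrix', LinearMap.toMatrix'_toLin'] at h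
  rw [← h, rank_eq_finrank_range_toLin _ (b.smulTower' (Pi.basisFun A m))
    (b.smulTower' (Pi.basisFun A m)), toLin_toMatrix, LinearMap.range_restrictScalars]

theorem finrank_range_eq_rank_block_matrix_general
    (K : Type*) [Field K]
    (q : ℕ) (k : ℕ)
    (M : Matrix (Fin q) (Fin q) (PowerSeries K))
    (N : Matrix (Fin k × Fin q) (Fin k × Fin q) K)
    (hN : ∀ (i j : Fin k) (a b : Fin q),
      N (i, a) (j, b) =
        if (i : ℕ) + (j : ℕ) ≤ k - 1 then
          PowerSeries.coeff (k - 1 - (i : ℕ) - (j : ℕ)) (M a b)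
        else 0) :
    Module.finrank K
      (Submodule.restrictScalars K
        (LinearMap.range (Matrix.toLin'
          (M.map (Ideal.Quotient.mk
            (Ideal.span {(PowerSeries.X : PowerSeries K) ^ k})))))) = N.rank := by
  rw [finrank_range_toLin'_restrictScalars (PowerSeries.quotientSpanXPowBasis K k)]
  have hN_eq : N = (comp _ _ _ _ K ((M.map (Ideal.Quotient.mk _)).map
      (Algebra.leftMulMatrix (PowerSeries.quotientSpanXPowBasis K k)))).submatrix
      ((Equiv.prodComm _ _).trans (Equiv.prodCongr (.refl _) Fin.revPerm)) (Equiv.prodComm _ _) := by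
    ext ⟨i, a⟩ ⟨j, b⟩
    have hrev : k - (i + 1) = k - 1 - i := by omega
    simp only [submatrix_apply, comp_apply, Equiv.trans_apply, Equiv.prodComm_apply,
      Prod.swap_prod_mk, Equiv.prodCongr_apply, Prod.map, Equiv.refl_apply, Fin.revPerm_apply,
      map_apply, PowerSeries.leftMulMatrix_quotientSpanXPowBasis_mk, hN, Fin.le_def, Fin.val_rev,
      hrev]
    exact if_congr (by omega) rfl rfl
  rw [hN_eq, rank_submatrix]

/-- Let `K` be a field, `q > 0`, `k ≥ 1`, and `M` a `q × q` matrix over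
`K⟦X⟧`, with coefficient matrices `Mⱼ` over `K` (so `M = Σⱼ X^j Mⱼ`).  Let
`ψₖ : Bₖ^q → Bₖ^q` be the `Bₖ`-linear map induced by the reduction of `M` modulo `X^k`
(where `Bₖ := K⟦X⟧ ⧸ (X^k)`).  Then the `K`-dimension of the image of `ψₖ` equals the rank
of the `(kq) × (kq)` block matrix `Nₖ` over `K` whose block in block-row `i` and block-column
`j` (for `0 ≤ i, j ≤ k − 1`) is `M_{k−1−i−j}` if `k − 1 − i − j ≥ 0` and `0` otherwise. -/
theorem finrank_range_eq_rank_block_matrix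
    (K : Type*) [Field K]
    (q : ℕ) (hq : 0 < q) (k : ℕ) (hk : 1 ≤ k)
    (M : Matrix (Fin q) (Fin q) (PowerSeries K))
    (N : Matrix (Fin k × Fin q) (Fin k × Fin q) K)
    (hN : ∀ (i j : Fin k) (a b : Fin q),
      N (i, a) (j, b) =
        if (i : ℕ) + (j : ℕ) ≤ k - 1 then
          PowerSeries.coeff (k - 1 - (i : ℕ) - (j : ℕ)) (M a b)
        else 0) :
    Module.finrank K
      (Submodule.restrictScalars K
        (LinearMap.range (Matrix.toLin'
          (M.map (Ideal.Quotient.mk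
            (Ideal.span {(PowerSeries.X : PowerSeries K) ^ k})))))) = N.rank :=
  finrank_range_eq_rank_block_matrix_general K q k M N hN
end

section
/- Let K be a field of characteristic ≠ 2, let B := K[x,y]/(x,y)² be the quotient of the polynomial ring K[x,y] by the square of the ideal (x,y), and let ψ̄ : B³ → B³ be the B-linear map given by the skew-symmetric matrix with rows (0, 0, x), (0, 0, y), (−x, −y, 0) (entries taken in B). Then the image of ψ̄ has dimension 3 as a K-vector space; in particular this dimension is odd. -/
/-!
In `B = K[x,y]/(x,y)²` the maximal ideal `𝔪 = (x, y)` squares to zero, so every `b ∈ B` acts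
on `𝔪` through its constant term. The columns of the matrix have entries in `𝔪`, hence their
`B`-span, the image, equals their `K`-span. The columns `(0,0,-x)`, `(0,0,-y)`, `(x,y,0)` are
`K`-linearly independent because `x` and `y` are, so the image has dimension `3`.
-/

open MvPolynomial

namespace Submodule

variable {R A M : Type*} [CommSemiring R] [Semiring A] [Algebra R A] [AddCommMonoid M]
  [Module R M] [Module A M] [IsScalarTower R A M]

theorem restrictScalars_span_of_forall_exists_smul_eq {s : Set M}
    (h : ∀ a : A, ∃ r : R, ∀ m ∈ s, a • m = r • m) :
    (span A s).restrictScalars R = span R s := by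
  refine ((span_le_restrictScalars R A s).antisymm fun m hm => ?_).symm
  refine span_induction (fun m hm => subset_span hm) (zero_mem _) (fun _ _ _ _ => add_mem)
    (fun a m _ hm => ?_) hm
  obtain ⟨r, hr⟩ := h a
  refine span_induction (fun m hm => ?_) (by simp) (fun _ _ _ _ h₁ h₂ => ?_)
    (fun r' m _ hm => ?_) hm
  · rw [hr m hm]
    exact smul_mem _ r (subset_span hm)
  · rw [smul_add]
    exact add_mem h₁ h₂
  · rw [smul_comm]
    exact smul_mem _ r' hm

end Submodule

namespace Ideal.Quotient

variable {K A : Type*} [CommRing K] [CommRing A] [Algebra K A] {J : Ideal A}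

theorem mk_mul_mk_eq_zero_of_mem {a b : A} (ha : a ∈ J) (hb : b ∈ J) :
    mk (J ^ 2) a * mk (J ^ 2) b = 0 := by
  rw [← map_mul, eq_zero_iff_mem, pow_two]
  exact mul_mem_mul ha hb

theorem exists_mul_eq_smul_of_sub_algebraMap_mem
    (hJ : ∀ a : A, ∃ c : K, a - algebraMap K A c ∈ J) (b : A ⧸ J ^ 2) :
    ∃ c : K, ∀ z ∈ J.map (mk (J ^ 2)), b * z = c • z := by
  obtain ⟨a, rfl⟩ := mk_surjective b
  obtain ⟨c, hc⟩ := hJ a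
  refine ⟨c, fun z hz => ?_⟩
  obtain ⟨a', ha', rfl⟩ := (mem_map_iff_of_surjective _ mk_surjective).mp hz
  have h := mk_mul_mk_eq_zero_of_mem hc ha'
  rw [map_sub, sub_mul, sub_eq_zero] at h
  rw [h, Algebra.smul_def]
  rfl

end Ideal.Quotient

namespace MvPolynomial

variable {σ K : Type*}

theorem sub_C_constantCoeff_mem_idealOfVars [CommRing K] (p : MvPolynomial σ K) :
    p - C (constantCoeff p) ∈ idealOfVars σ K := by
  rw [← pow_one (idealOfVars σ K), mem_pow_idealOfVars_iff']
  intro d hd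
  obtain rfl : d = 0 := by rwa [Nat.lt_one_iff, Finsupp.degree_eq_zero_iff] at hd
  simp [constantCoeff_eq]

theorem linearIndependent_mk_X [Field K] {J : Ideal (MvPolynomial σ K)}
    (hJ : J ≤ idealOfVars σ K) :
    LinearIndependent K fun i => Ideal.Quotient.mk (J ^ 2) (X i) := by
  classical
  rw [linearIndependent_iff']
  intro s g hg i hi
  have hmem : ∑ j ∈ s, g j • X j ∈ idealOfVars σ K ^ 2 := by
    refine Ideal.pow_right_mono hJ 2 (Ideal.Quotient.eq_zero_iff_mem.mp ?_)
    change Ideal.Quotient.mkₐ K (J ^ 2) _ = 0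
    simp_rw [map_sum, map_smul]
    exact hg
  have := (mem_pow_idealOfVars_iff' 2 _).mp hmem (Finsupp.single i 1) (by simp)
  simpa [coeff_sum, coeff_X, Finsupp.single_eq_single_iff, hi] using this

end MvPolynomial

section SkewMatrix

variable {K : Type*} [Field K]

theorem linearIndependent_col_of_linearIndependent_pair {V : Type*} [AddCommGroup V]
    [Module K V] {x y : V} (hxy : LinearIndependent K ![x, y]) :
    LinearIndependent K (!![0, 0, x; 0, 0, y; -x, -y, 0] : Matrix (Fin 3) (Fin 3) V).col := by
  rw [Fintype.linearIndependent_iff]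
  intro g hg
  have h₀ : g 2 • x = 0 := by simpa [Fin.sum_univ_three] using congrFun hg 0
  have h₂ : g 0 • x + g 1 • y = 0 := by
    simpa [Fin.sum_univ_three, neg_add_eq_zero, eq_neg_iff_add_eq_zero] using congrFun hg 2
  obtain ⟨hg₀, hg₁⟩ := LinearIndependent.pair_iff.mp hxy _ _ h₂
  have hg₂ := (smul_eq_zero.mp h₀).resolve_right (hxy.ne_zero 0)
  intro i
  fin_cases i <;> assumption

theorem finrank_restrictScalars_range_toLin'_of_linearIndependent_pair {A : Type*} [CommRing A]
    [Algebra K A] {J : Ideal A} (hJ : ∀ a : A, ∃ c : K, a - algebraMap K A c ∈ J)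
    {x y : A ⧸ J ^ 2} (hx : x ∈ J.map (Ideal.Quotient.mk (J ^ 2)))
    (hy : y ∈ J.map (Ideal.Quotient.mk (J ^ 2))) (hxy : LinearIndependent K ![x, y]) :
    Module.finrank K ((LinearMap.range
      (Matrix.toLin' !![0, 0, x; 0, 0, y; -x, -y, 0])).restrictScalars K) = 3 := by
  have hsmul (b : A ⧸ J ^ 2) : ∃ c : K, ∀ u ∈ Set.range (!![0, 0, x; 0, 0, y; -x, -y, 0]).col,
      b • u = c • u := by
    obtain ⟨c, hc⟩ := Ideal.Quotient.exists_mul_eq_smul_of_sub_algebraMap_mem hJ b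
    refine ⟨c, ?_⟩
    rintro _ ⟨j, rfl⟩
    funext i
    fin_cases j <;> fin_cases i <;> simp [hc x hx, hc y hy]
  rw [Matrix.range_toLin', Submodule.restrictScalars_span_of_forall_exists_smul_eq hsmul,
    finrank_span_eq_card (linearIndependent_col_of_linearIndependent_pair hxy), Fintype.card_fin]

end SkewMatrix

theorem finrank_range_example_eq_three_and_odd_general
    (K : Type*) [Field K]
    (x y : MvPolynomial (Fin 2) K ⧸
      ((Ideal.span {MvPolynomial.X 0, MvPolynomial.X 1} :
          Ideal (MvPolynomial (Fin 2) K)) ^ 2))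
    (hx : x = Ideal.Quotient.mk _ (MvPolynomial.X 0))
    (hy : y = Ideal.Quotient.mk _ (MvPolynomial.X 1))
    (M : Matrix (Fin 3) (Fin 3)
      (MvPolynomial (Fin 2) K ⧸
        ((Ideal.span {MvPolynomial.X 0, MvPolynomial.X 1} :
            Ideal (MvPolynomial (Fin 2) K)) ^ 2)))
    (hM : M = !![0, 0, x; 0, 0, y; -x, -y, 0]) :
    Module.finrank K
      (Submodule.restrictScalars K (LinearMap.range (Matrix.toLin' M))) = 3 ∧
    Odd (Module.finrank K
      (Submodule.restrictScalars K (LinearMap.range (Matrix.toLin' M)))) := by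
  have hJ : Ideal.span {X 0, X 1} = idealOfVars (Fin 2) K := by
    congr 1
    ext p
    simp [Fin.exists_fin_two, eq_comm]
  have hxy : LinearIndependent K ![x, y] := by
    convert linearIndependent_mk_X hJ.le using 1
    ext i
    fin_cases i <;> simp [hx, hy]
  have hrank := finrank_restrictScalars_range_toLin'_of_linearIndependent_pair
    (fun p => ⟨constantCoeff p, hJ ▸ sub_C_constantCoeff_mem_idealOfVars p⟩)
    (hx ▸ Ideal.mem_map_of_mem _ (Ideal.subset_span (by simp)))
    (hy ▸ Ideal.mem_map_of_mem _ (Ideal.subset_span (by simp))) hxy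
  subst hM
  exact ⟨hrank, by rw [hrank]; decide⟩

/-- Let `K` be a field of characteristic `≠ 2`, let
`B := K[x,y] ⧸ (x,y)²`, and let `ψ̄ : B³ → B³` be the `B`-linear map given by the
skew-symmetric matrix with rows `(0, 0, x)`, `(0, 0, y)`, `(−x, −y, 0)` (entries in `B`).
Then the image of `ψ̄` has `K`-dimension `3`; in particular the dimension is odd. -/
theorem finrank_range_example_eq_three_and_odd
    (K : Type*) [Field K] (hK : ringChar K ≠ 2)
    (x y : MvPolynomial (Fin 2) K ⧸
      ((Ideal.span {MvPolynomial.X 0, MvPolynomial.X 1} :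
          Ideal (MvPolynomial (Fin 2) K)) ^ 2))
    (hx : x = Ideal.Quotient.mk _ (MvPolynomial.X 0))
    (hy : y = Ideal.Quotient.mk _ (MvPolynomial.X 1))
    (M : Matrix (Fin 3) (Fin 3)
      (MvPolynomial (Fin 2) K ⧸
        ((Ideal.span {MvPolynomial.X 0, MvPolynomial.X 1} :
            Ideal (MvPolynomial (Fin 2) K)) ^ 2)))
    (hM : M = !![0, 0, x; 0, 0, y; -x, -y, 0]) :
    Module.finrank K
      (Submodule.restrictScalars K (LinearMap.range (Matrix.toLin' M))) = 3 ∧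
    Odd (Module.finrank K
      (Submodule.restrictScalars K (LinearMap.range (Matrix.toLin' M)))) :=
  finrank_range_example_eq_three_and_odd_general K x y hx hy M hM
end

section
/- Let K be a field of characteristic ≠ 2, let A := K⟦X⟧, and for k ≥ 1 let B_k := A/(X^k). Let V be a free A-module of rank 2r equipped with a symmetric A-bilinear form Q : V × V → A whose reduction modulo X is nondegenerate on V/XV. Let W₁, W₂ ⊆ V be submodules that are free of rank r, such that V/W₁ and V/W₂ are free A-modules, and such that W₁ and W₂ are totally isotropic for Q. For k ≥ 1 let q_k be the dimension over K of the intersection, inside V/X^kV, of the image of W₁ and the image of W₂ under the quotient map V → V/X^kV. Then the sequence {k·q₁ − q_k}_{k≥1} is non-decreasing, i.e. k·q₁ − q_k ≤ (k+1)·q₁ − q_{k+1} for every k ≥ 1. -/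
set_option maxHeartbeats 1000000

open PowerSeries

section Aux

variable {K : Type*} [Field K] {V : Type*} [AddCommGroup V] [Module (PowerSeries K) V]

lemma mem_spanSmulTop {a : PowerSeries K} {v : V} :
    v ∈ Ideal.span {a} • (⊤ : Submodule (PowerSeries K) V) ↔ ∃ u : V, a • u = v := by
  rw [Submodule.ideal_span_singleton_smul]
  constructor
  · rintro ⟨u, -, rfl⟩
    exact ⟨u, rfl⟩
  · rintro ⟨u, rfl⟩
    exact Submodule.smul_mem_pointwise_smul u a ⊤ trivial

end Aux

/-- Let `K` be a field of characteristic `≠ 2`, `A := K⟦X⟧`, and `V` a free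
`A`-module of rank `2r` with a symmetric `A`-bilinear form `Q` whose reduction modulo `X` is
nondegenerate on `V/XV`.  Let `W₁, W₂ ⊆ V` be free rank-`r` submodules with free quotients
`V/Wᵢ` which are totally isotropic for `Q`.  For `k ≥ 1` let `qₖ` be the `K`-dimension of the
intersection, inside `V/XᵏV`, of the images of `W₁` and `W₂`.  Then the sequence
`{k·q₁ − qₖ}` is non-decreasing: `k·q₁ − qₖ ≤ (k+1)·q₁ − qₖ₊₁` for every `k ≥ 1`. -/
theorem k_mul_q_one_sub_q_k_monotone
    (K : Type*) [Field K] (hK : ringChar K ≠ 2)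
    (V : Type*) [AddCommGroup V] [Module (PowerSeries K) V]
    [Module K V] [IsScalarTower K (PowerSeries K) V]
    [Module.Free (PowerSeries K) V] (r : ℕ)
    (hV : Module.finrank (PowerSeries K) V = 2 * r)
    (Q : V →ₗ[PowerSeries K] V →ₗ[PowerSeries K] PowerSeries K)
    (hQsymm : ∀ v w : V, Q v w = Q w v)
    (hQnd : ∀ v : V, (∀ w : V, Q v w ∈ Ideal.span {(X : PowerSeries K)}) →
      v ∈ (Ideal.span {(X : PowerSeries K)}) • (⊤ : Submodule (PowerSeries K) V))
    (W₁ W₂ : Submodule (PowerSeries K) V)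
    [Module.Free (PowerSeries K) W₁] [Module.Free (PowerSeries K) W₂]
    (hW₁ : Module.finrank (PowerSeries K) W₁ = r)
    (hW₂ : Module.finrank (PowerSeries K) W₂ = r)
    [Module.Free (PowerSeries K) (V ⧸ W₁)] [Module.Free (PowerSeries K) (V ⧸ W₂)]
    (hiso₁ : ∀ v ∈ W₁, ∀ w ∈ W₁, Q v w = 0)
    (hiso₂ : ∀ v ∈ W₂, ∀ w ∈ W₂, Q v w = 0)
    (q : ℕ → ℕ)
    (hq : ∀ k : ℕ, q k = Module.finrank K
      (Submodule.restrictScalars K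
        ((W₁.map ((Ideal.span {(X : PowerSeries K) ^ k} •
            (⊤ : Submodule (PowerSeries K) V)).mkQ)) ⊓
         (W₂.map ((Ideal.span {(X : PowerSeries K) ^ k} •
            (⊤ : Submodule (PowerSeries K) V)).mkQ)))))
    (k : ℕ) (hk : 1 ≤ k) :
    (k : ℤ) * q 1 - q k ≤ (k + 1 : ℤ) * q 1 - q (k + 1) := by
  -- It suffices to prove `q (k+1) ≤ q 1 + q k`.
  suffices h : q (k + 1) ≤ q 1 + q k by
    have h' : (q (k+1) : ℤ) ≤ (q 1 : ℤ) + q k := by exact_mod_cast h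
    linarith
  have hq1 := hq 1
  have hqk := hq k
  have hqk1 := hq (k + 1)
  set N1 : Submodule (PowerSeries K) V :=
    Ideal.span {(X : PowerSeries K) ^ 1} • (⊤ : Submodule (PowerSeries K) V) with hN1def
  set Nk : Submodule (PowerSeries K) V :=
    Ideal.span {(X : PowerSeries K) ^ k} • (⊤ : Submodule (PowerSeries K) V) with hNkdef
  set Nk1 : Submodule (PowerSeries K) V :=
    Ideal.span {(X : PowerSeries K) ^ (k + 1)} • (⊤ : Submodule (PowerSeries K) V) with hNk1def
  set S1 : Submodule (PowerSeries K) (V ⧸ N1) := (W₁.map N1.mkQ) ⊓ (W₂.map N1.mkQ) with hS1def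
  set Sk : Submodule (PowerSeries K) (V ⧸ Nk) := (W₁.map Nk.mkQ) ⊓ (W₂.map Nk.mkQ) with hSkdef
  set Sk1 : Submodule (PowerSeries K) (V ⧸ Nk1) :=
    (W₁.map Nk1.mkQ) ⊓ (W₂.map Nk1.mkQ) with hSk1def
  -- regularity of powers of X on V
  have hXreg : ∀ (j : ℕ) (v : V), (X : PowerSeries K) ^ j • v = 0 → v = 0 := by
    intro j v h
    rcases smul_eq_zero.mp h with h' | h'
    · exact absurd h' (pow_ne_zero j X_ne_zero)
    · exact h'
  -- regularity on the quotients V ⧸ Wᵢ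
  have hreg : ∀ (W : Submodule (PowerSeries K) V), Module.Free (PowerSeries K) (V ⧸ W) →
      ∀ (j : ℕ) (v : V), (X : PowerSeries K) ^ j • v ∈ W → v ∈ W := by
    intro W _ j v h
    have h0 : (X : PowerSeries K) ^ j • (Submodule.Quotient.mk v : V ⧸ W) = 0 := by
      rw [← Submodule.Quotient.mk_smul, Submodule.Quotient.mk_eq_zero]
      exact h
    rcases smul_eq_zero.mp h0 with h' | h'
    · exact absurd h' (pow_ne_zero j X_ne_zero)
    · exact (Submodule.Quotient.mk_eq_zero _).mp h'
  have hreg₁ := hreg W₁ inferInstance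
  have hreg₂ := hreg W₂ inferInstance
  -- the three comparison maps
  have hle : Nk1 ≤ Nk := by
    intro v hv
    rcases mem_spanSmulTop.mp hv with ⟨u, rfl⟩
    exact mem_spanSmulTop.mpr ⟨X • u, by rw [smul_smul, ← pow_succ]⟩
  set φ : (V ⧸ Nk1) →ₗ[PowerSeries K] V ⧸ Nk :=
    Submodule.mapQ Nk1 Nk LinearMap.id (fun x hx => hle hx) with hφdef
  set ψ : (V ⧸ N1) →ₗ[PowerSeries K] V ⧸ Nk1 :=
    Submodule.mapQ N1 Nk1 ((X : PowerSeries K) ^ k • LinearMap.id) (by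
      intro v hv
      rcases mem_spanSmulTop.mp hv with ⟨u, rfl⟩
      show (X : PowerSeries K) ^ k • ((X : PowerSeries K) ^ 1 • u) ∈ Nk1
      exact mem_spanSmulTop.mpr ⟨u, by rw [smul_smul, ← pow_add]⟩) with hψdef
  set χ : (V ⧸ Nk) →ₗ[PowerSeries K] V ⧸ Nk1 :=
    Submodule.mapQ Nk Nk1 ((X : PowerSeries K) • LinearMap.id) (by
      intro v hv
      rcases mem_spanSmulTop.mp hv with ⟨u, rfl⟩
      show (X : PowerSeries K) • ((X : PowerSeries K) ^ k • u) ∈ Nk1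
      exact mem_spanSmulTop.mpr ⟨u, by rw [smul_smul, ← pow_succ']⟩) with hχdef
  have hφap : ∀ v : V, φ (Nk1.mkQ v) = Nk.mkQ v := by
    intro v
    rw [hφdef]
    simp [Submodule.mapQ_apply]
  have hψap : ∀ v : V, ψ (N1.mkQ v) = Nk1.mkQ ((X : PowerSeries K) ^ k • v) := by
    intro v
    rw [hψdef]
    simp [Submodule.mapQ_apply]
  have hχap : ∀ v : V, χ (Nk.mkQ v) = Nk1.mkQ ((X : PowerSeries K) • v) := by
    intro v
    rw [hχdef]
    simp [Submodule.mapQ_apply]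
  -- injectivity of ψ and χ
  have hψinj : Function.Injective ψ := by
    rw [← LinearMap.ker_eq_bot]
    refine (Submodule.eq_bot_iff _).mpr fun x hx => ?_
    obtain ⟨v, rfl⟩ := N1.mkQ_surjective x
    have h0 : Nk1.mkQ ((X : PowerSeries K) ^ k • v) = 0 := by rw [← hψap]; exact hx
    rw [Submodule.mkQ_apply, Submodule.Quotient.mk_eq_zero] at h0
    rcases mem_spanSmulTop.mp h0 with ⟨u, hu⟩
    have h1 : (X : PowerSeries K) ^ k • (v - (X : PowerSeries K) ^ 1 • u) = 0 := by
      rw [smul_sub, smul_smul, ← pow_add, ← hu]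
      abel
    have h2 := hXreg k _ h1
    rw [sub_eq_zero] at h2
    have h3 : v ∈ N1 := mem_spanSmulTop.mpr ⟨u, h2.symm⟩
    rw [Submodule.mkQ_apply, Submodule.Quotient.mk_eq_zero]
    exact h3
  have hχinj : Function.Injective χ := by
    rw [← LinearMap.ker_eq_bot]
    refine (Submodule.eq_bot_iff _).mpr fun x hx => ?_
    obtain ⟨v, rfl⟩ := Nk.mkQ_surjective x
    have h0 : Nk1.mkQ ((X : PowerSeries K) • v) = 0 := by rw [← hχap]; exact hx
    rw [Submodule.mkQ_apply, Submodule.Quotient.mk_eq_zero] at h0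
    rcases mem_spanSmulTop.mp h0 with ⟨u, hu⟩
    have h1 : (X : PowerSeries K) ^ 1 • (v - (X : PowerSeries K) ^ k • u) = 0 := by
      rw [pow_one, smul_sub, smul_smul, ← pow_succ', ← hu]
      abel
    have h2 := hXreg 1 _ h1
    rw [sub_eq_zero] at h2
    have h3 : v ∈ Nk := mem_spanSmulTop.mpr ⟨u, h2.symm⟩
    rw [Submodule.mkQ_apply, Submodule.Quotient.mk_eq_zero]
    exact h3
  -- the kernel of φ
  have hkerφ : LinearMap.ker φ = Nk.map Nk1.mkQ := by
    apply le_antisymm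
    · intro x hx
      obtain ⟨v, rfl⟩ := Nk1.mkQ_surjective x
      have h0 : Nk.mkQ v = 0 := by rw [← hφap]; exact hx
      rw [Submodule.mkQ_apply, Submodule.Quotient.mk_eq_zero] at h0
      exact ⟨v, h0, rfl⟩
    · rintro x ⟨v, hv, rfl⟩
      show φ (Nk1.mkQ v) = 0
      rw [hφap, Submodule.mkQ_apply, Submodule.Quotient.mk_eq_zero]
      exact hv
  -- the image of Sk1 under φ lands in Sk
  have hφmap : Submodule.map φ Sk1 ≤ Sk := by
    rw [hSk1def]
    refine le_trans (Submodule.map_inf_le _) ?_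
    rw [hSkdef]
    apply inf_le_inf
    · rw [← Submodule.map_comp]
      apply Submodule.map_le_iff_le_comap.mpr
      intro w hw
      exact ⟨w, hw, by rw [LinearMap.comp_apply, hφap]⟩
    · rw [← Submodule.map_comp]
      apply Submodule.map_le_iff_le_comap.mpr
      intro w hw
      exact ⟨w, hw, by rw [LinearMap.comp_apply, hφap]⟩
  -- the image of Sk under χ lands in Sk1
  have hχmap : Submodule.map χ Sk ≤ Sk1 := by
    rw [hSkdef]
    refine le_trans (Submodule.map_inf_le _) ?_
    rw [hSk1def]
    apply inf_le_inf
    · rw [← Submodule.map_comp]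
      apply Submodule.map_le_iff_le_comap.mpr
      intro w hw
      exact ⟨(X : PowerSeries K) • w, Submodule.smul_mem _ _ hw, by rw [LinearMap.comp_apply, hχap]⟩
    · rw [← Submodule.map_comp]
      apply Submodule.map_le_iff_le_comap.mpr
      intro w hw
      exact ⟨(X : PowerSeries K) • w, Submodule.smul_mem _ _ hw, by rw [LinearMap.comp_apply, hχap]⟩
  -- the key identity: ker φ ⊓ Sk1 = ψ '' S1
  have hkey : LinearMap.ker φ ⊓ Sk1 = Submodule.map ψ S1 := by
    apply le_antisymm
    · rintro x ⟨hxker, hx1, hx2⟩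
      rcases hx1 with ⟨w₁, hw₁, rfl⟩
      rcases hx2 with ⟨w₂, hw₂, hww⟩
      rw [hkerφ] at hxker
      -- extract v₁ with w₁ = X^k • v₁ and v₁ ∈ W₁
      rcases hxker with ⟨n, hn, hmk⟩
      have h1 : n - w₁ ∈ Nk1 := (Submodule.Quotient.eq _).mp hmk
      rcases mem_spanSmulTop.mp hn with ⟨m, rfl⟩
      rcases mem_spanSmulTop.mp h1 with ⟨u, hu⟩
      have hw1v : w₁ = (X : PowerSeries K) ^ k • (m - (X : PowerSeries K) • u) := by
        rw [smul_sub, smul_smul, ← pow_succ, hu]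
        abel
      set v₁ := m - (X : PowerSeries K) • u with hv₁def
      have hv₁W : v₁ ∈ W₁ := hreg₁ k v₁ (by rw [← hw1v]; exact hw₁)
      -- extract v₂ with w₂ = X^k • v₂ and v₂ ∈ W₂
      have hw2k : w₂ - (X : PowerSeries K) ^ k • m ∈ Nk1 := by
        have : Nk1.mkQ w₂ = Nk1.mkQ ((X : PowerSeries K) ^ k • m) := by
          rw [hww, hmk]
        exact (Submodule.Quotient.eq _).mp this
      rcases mem_spanSmulTop.mp hw2k with ⟨u₂, hu₂⟩
      have hw2v : w₂ = (X : PowerSeries K) ^ k • (m + (X : PowerSeries K) • u₂) := by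
        rw [smul_add, smul_smul, ← pow_succ, hu₂]
        abel
      set v₂ := m + (X : PowerSeries K) • u₂ with hv₂def
      have hv₂W : v₂ ∈ W₂ := hreg₂ k v₂ (by rw [← hw2v]; exact hw₂)
      -- v₂ - v₁ ∈ N1
      have hvv : v₂ - v₁ ∈ N1 := by
        refine mem_spanSmulTop.mpr ⟨u₂ + u, ?_⟩
        rw [hv₁def, hv₂def, pow_one, smul_add]
        abel
      refine ⟨N1.mkQ v₁, ⟨⟨v₁, hv₁W, rfl⟩, ⟨v₂, hv₂W, ?_⟩⟩, ?_⟩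
      · rw [Submodule.mkQ_apply, Submodule.mkQ_apply]
        exact (Submodule.Quotient.eq _).mpr hvv
      · rw [hψap, ← hw1v]
    · rintro x ⟨y, ⟨hy1, hy2⟩, rfl⟩
      rcases hy1 with ⟨w₁, hw₁, rfl⟩
      rcases hy2 with ⟨w₂, hw₂, hww⟩
      have hwwN : w₂ - w₁ ∈ N1 := (Submodule.Quotient.eq _).mp hww
      rcases mem_spanSmulTop.mp hwwN with ⟨t, ht⟩
      constructor
      · rw [hkerφ, hψap]
        exact ⟨(X : PowerSeries K) ^ k • w₁, mem_spanSmulTop.mpr ⟨w₁, rfl⟩, rfl⟩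
      · constructor
        · rw [hψap]
          exact ⟨(X : PowerSeries K) ^ k • w₁, Submodule.smul_mem _ _ hw₁, rfl⟩
        · rw [hψap]
          refine ⟨(X : PowerSeries K) ^ k • w₂, Submodule.smul_mem _ _ hw₂, ?_⟩
          rw [Submodule.mkQ_apply, Submodule.mkQ_apply]
          refine (Submodule.Quotient.eq _).mpr (mem_spanSmulTop.mpr ⟨t, ?_⟩)
          rw [← smul_sub, ← ht, smul_smul, ← pow_add]
  -- now split on finite-dimensionality of Sk1
  by_cases hfd : FiniteDimensional K (Submodule.restrictScalars K Sk1)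
  · -- Sk is finite dimensional, via the injection χ
    haveI := hfd
    have hχres : ∀ x ∈ Submodule.restrictScalars K Sk,
        (χ.restrictScalars K) x ∈ Submodule.restrictScalars K Sk1 := by
      intro x hx
      exact hχmap ⟨x, hx, rfl⟩
    set e : Submodule.restrictScalars K Sk →ₗ[K] Submodule.restrictScalars K Sk1 :=
      (χ.restrictScalars K).restrict hχres with hedef
    have heinj : Function.Injective e := by
      intro a b hab
      have : χ (a : V ⧸ Nk) = χ (b : V ⧸ Nk) := by
        have := congrArg (Subtype.val) hab
        simpa [hedef, LinearMap.restrict_apply] using this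
      exact Subtype.ext (hχinj this)
    haveI hfdk : FiniteDimensional K (Submodule.restrictScalars K Sk) :=
      FiniteDimensional.of_injective e heinj
    -- rank–nullity for the restriction of φ to Sk1
    set g : Submodule.restrictScalars K Sk1 →ₗ[K] V ⧸ Nk :=
      (φ.restrictScalars K).domRestrict (Submodule.restrictScalars K Sk1) with hgdef
    have hrn := LinearMap.finrank_range_add_finrank_ker g
    -- range bound
    have hrange : Module.finrank K (LinearMap.range g) ≤ q k := by
      rw [hgdef, LinearMap.range_domRestrict]
      have hsub : (Submodule.restrictScalars K Sk1).map (φ.restrictScalars K) ≤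
          Submodule.restrictScalars K Sk := by
        rintro x ⟨y, hy, rfl⟩
        exact hφmap ⟨y, hy, rfl⟩
      rw [hqk]
      exact Submodule.finrank_mono hsub
    -- kernel computation
    have hker : Module.finrank K (LinearMap.ker g) = q 1 := by
      have hker1 : LinearMap.ker g =
          Submodule.comap (Submodule.restrictScalars K Sk1).subtype
            (Submodule.restrictScalars K (LinearMap.ker φ ⊓ Sk1)) := by
        rw [hgdef, LinearMap.ker_domRestrict]
        ext x
        simp only [Submodule.mem_comap, LinearMap.mem_ker, LinearMap.restrictScalars_apply,
          Submodule.restrictScalars_mem, Submodule.mem_inf]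
        exact ⟨fun h => ⟨h, x.2⟩, fun h => h.1⟩
      have hTle : Submodule.restrictScalars K (LinearMap.ker φ ⊓ Sk1) ≤
          Submodule.restrictScalars K Sk1 := fun x hx => hx.2
      have e1 := Submodule.comapSubtypeEquivOfLe hTle
      rw [hker1, LinearEquiv.finrank_eq e1]
      -- identify with ψ(S1)
      have hmapeq : Submodule.restrictScalars K (LinearMap.ker φ ⊓ Sk1) =
          Submodule.map (ψ.restrictScalars K) (Submodule.restrictScalars K S1) := by
        rw [hkey]
        ext x
        simp only [Submodule.restrictScalars_mem, Submodule.mem_map,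
          LinearMap.restrictScalars_apply]
      rw [hmapeq]
      have hψinjK : Function.Injective (ψ.restrictScalars K) := hψinj
      have e2 := Submodule.equivMapOfInjective (ψ.restrictScalars K) hψinjK
        (Submodule.restrictScalars K S1)
      rw [← LinearEquiv.finrank_eq e2, hq1]
    -- conclude
    rw [hqk1]
    calc Module.finrank K (Submodule.restrictScalars K Sk1)
        = Module.finrank K (LinearMap.range g) + Module.finrank K (LinearMap.ker g) := hrn.symm
      _ ≤ q k + q 1 := Nat.add_le_add hrange (le_of_eq hker)
      _ = q 1 + q k := Nat.add_comm _ _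
  · -- infinite-dimensional case: q (k+1) = 0
    have : q (k + 1) = 0 := by
      rw [hqk1]
      exact Module.finrank_of_not_finite (fun h => hfd h)
    omega
end
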